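/- arXiv:2412.01580 — 6 statements merged into one kernel-verified Lean document; each statement's English description precedes it below -/
import Mathlib

section
/- Let H be a real Hilbert space (e.g. L²([0,∞); ℝⁿ)) and let H₁, H₂ : H → H be operators with incremental gain bounds γ₁ and γ₂ respectively (i.e. ‖Hᵢ(x) − Hᵢ(x̄)‖ ≤ γᵢ‖x − x̄‖ for all x, x̄ ∈ H). If γ₁γ₂ < 1, then for every u ∈ H there exist unique e, y ∈ H satisfying the feedback equations e = u − H₂(y) and y = H₁(e). -/
/-!
**Statement 0** (Incremental small gain theorem).
Let `H` be a real Hilbert space and `H₁, H₂ : H → H` operators with incremental gain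
bounds `γ₁, γ₂`.  If `γ₁ * γ₂ < 1`, then for every `u ∈ H` there exist unique
`e, y ∈ H` satisfying the feedback equations `e = u - H₂ y` and `y = H₁ e`.
-/

theorem incremental_small_gain
    {H : Type*} [NormedAddCommGroup H] [InnerProductSpace ℝ H] [CompleteSpace H]
    (H₁ H₂ : H → H) (γ₁ γ₂ : ℝ)
    (h₁ : ∀ x y : H, ‖H₁ x - H₁ y‖ ≤ γ₁ * ‖x - y‖)
    (h₂ : ∀ x y : H, ‖H₂ x - H₂ y‖ ≤ γ₂ * ‖x - y‖)
    (hγ : γ₁ * γ₂ < 1) :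
    ∀ u : H, ∃! p : H × H, p.1 = u - H₂ p.2 ∧ p.2 = H₁ p.1 := by
  intro u
  set f : H → H := fun e => u - H₂ (H₁ e) with hf
  set K : NNReal := ⟨max (γ₁ * γ₂) 0, le_max_right _ _⟩ with hK
  have hlip : LipschitzWith K f := by
    apply LipschitzWith.of_dist_le_mul
    intro e e'
    have hd : dist (f e) (f e') = ‖H₂ (H₁ e) - H₂ (H₁ e')‖ := by
      rw [dist_eq_norm]
      show ‖(u - H₂ (H₁ e)) - (u - H₂ (H₁ e'))‖ = _
      rw [sub_sub_sub_cancel_left, norm_sub_rev]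
    rw [hd, dist_eq_norm]
    rcases le_or_gt 0 γ₂ with hγ₂ | hγ₂
    · rcases le_or_gt 0 γ₁ with hγ₁ | hγ₁
      · calc ‖H₂ (H₁ e) - H₂ (H₁ e')‖ ≤ γ₂ * ‖H₁ e - H₁ e'‖ := h₂ _ _
          _ ≤ γ₂ * (γ₁ * ‖e - e'‖) := by
              exact mul_le_mul_of_nonneg_left (h₁ _ _) hγ₂
          _ = γ₁ * γ₂ * ‖e - e'‖ := by ring
          _ ≤ (K : ℝ) * ‖e - e'‖ := by
              apply mul_le_mul_of_nonneg_right _ (norm_nonneg _)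
              exact le_max_left _ _
      · -- γ₁ < 0 forces H₁ e = H₁ e'
        have h0 : ‖H₁ e - H₁ e'‖ ≤ 0 := by
          rcases eq_or_ne e e' with rfl | hne
          · simp
          · have := h₁ e e'
            have : γ₁ * ‖e - e'‖ ≤ 0 :=
              mul_nonpos_of_nonpos_of_nonneg hγ₁.le (norm_nonneg _)
            linarith [h₁ e e']
        have : H₁ e = H₁ e' := by
          have := le_antisymm h0 (norm_nonneg _)
          rwa [norm_eq_zero, sub_eq_zero] at this
        rw [this]
        simp
        positivity
    · -- γ₂ < 0 forces H₂ constant on these points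
      have h0 : ‖H₂ (H₁ e) - H₂ (H₁ e')‖ ≤ 0 := by
        have := h₂ (H₁ e) (H₁ e')
        have h2 : γ₂ * ‖H₁ e - H₁ e'‖ ≤ 0 :=
          mul_nonpos_of_nonpos_of_nonneg hγ₂.le (norm_nonneg _)
        linarith
      calc ‖H₂ (H₁ e) - H₂ (H₁ e')‖ ≤ 0 := h0
        _ ≤ (K : ℝ) * ‖e - e'‖ := by positivity
  have hK1 : K < 1 := by
    rw [← NNReal.coe_lt_coe]
    simp only [NNReal.coe_one, hK, NNReal.coe_mk]
    exact max_lt hγ one_pos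
  have hcontr : ContractingWith K f := ⟨hK1, hlip⟩
  set e₀ := hcontr.fixedPoint f with he₀
  have hfix : f e₀ = e₀ := hcontr.fixedPoint_isFixedPt
  refine ⟨(e₀, H₁ e₀), ⟨?_, rfl⟩, ?_⟩
  · exact hfix.symm
  · rintro ⟨a, b⟩ ⟨ha, hb⟩
    simp only at ha hb
    have haf : f a = a := by
      rw [hf]
      simp only
      rw [← hb, ← ha]
    have : a = e₀ := hcontr.fixedPoint_unique haf
    subst this
    simp [hb]
end

section
/- Let H be a real Hilbert space and A ⊆ H × H a relation. Then SRG(A⁻¹) = { z⁻¹ : z ∈ SRG(A) }, where A⁻¹ := {(y, u) : (u, y) ∈ A}, the inverse of a nonzero complex number is the usual one, 0⁻¹ := ∞ and ∞⁻¹ := 0. -/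
/-!
Exchanging inputs and outputs inverts the ratio `‖y₁ - y₂‖ / ‖u₁ - u₂‖` and leaves the angle
unchanged, so it sends `r e^{±iθ}` to `r⁻¹ e^{±iθ} = (r e^{∓iθ})⁻¹`; both signs are present in
the SRG, so the finite nonzero points are inverted. A pair with `u₁ ≠ u₂` and `y₁ = y₂`
contributes `0` to the SRG of `R` and makes `R⁻¹` multivalued, which is `∞` in its SRG, and
conversely.
-/

open InnerProductGeometry OnePoint

variable {H : Type*} [NormedAddCommGroup H] [InnerProductSpace ℝ H]

/-- The finite part of the Scaled Relative Graph of a relation `R ⊆ H × H`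
(contributions from pairs of inputs `u₁ ≠ u₂`). -/
noncomputable def srg (R : Set (H × H)) : Set ℂ :=
  {w | ∃ u₁ y₁ u₂ y₂, (u₁, y₁) ∈ R ∧ (u₂, y₂) ∈ R ∧ u₁ ≠ u₂ ∧
    (w = (‖y₁ - y₂‖ / ‖u₁ - u₂‖ : ℝ) *
        Complex.exp (Complex.I * (angle (u₁ - u₂) (y₁ - y₂) : ℝ)) ∨
     w = (‖y₁ - y₂‖ / ‖u₁ - u₂‖ : ℝ) *
        Complex.exp (-(Complex.I * (angle (u₁ - u₂) (y₁ - y₂) : ℝ))))}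

/-- The Scaled Relative Graph of a relation as a subset of the extended complex plane:
the finite part, together with `∞` whenever the relation is multivalued at some input. -/
noncomputable def srgE (R : Set (H × H)) : Set (OnePoint ℂ) :=
  (fun z : ℂ => (z : OnePoint ℂ)) '' srg R ∪
    {w | w = (∞ : OnePoint ℂ) ∧ ∃ u y₁ y₂, (u, y₁) ∈ R ∧ (u, y₂) ∈ R ∧ y₁ ≠ y₂}

/-- Relational inverse: `R⁻¹ = {(y, u) : (u, y) ∈ R}`. -/
def relInv (R : Set (H × H)) : Set (H × H) := {p | (p.2, p.1) ∈ R}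

/-- Inversion on the extended complex plane: `z⁻¹` for `z ≠ 0`, `0⁻¹ = ∞`, `∞⁻¹ = 0`. -/
noncomputable def cinv : OnePoint ℂ → OnePoint ℂ :=
  OnePoint.rec ((0 : ℂ) : OnePoint ℂ)
    (fun z => if z = 0 then (∞ : OnePoint ℂ) else ((z⁻¹ : ℂ) : OnePoint ℂ))

lemma cinv_coe_zero : cinv ((0 : ℂ) : OnePoint ℂ) = ∞ := if_pos rfl

lemma cinv_coe_of_ne_zero {z : ℂ} (hz : z ≠ 0) :
    cinv (z : OnePoint ℂ) = ((z⁻¹ : ℂ) : OnePoint ℂ) :=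
  if_neg hz

lemma cinv_infty : cinv (∞ : OnePoint ℂ) = ((0 : ℂ) : OnePoint ℂ) := rfl

lemma cinv_involutive : Function.Involutive cinv := by
  intro w
  induction w using OnePoint.rec with
  | infty => rw [cinv_infty, cinv_coe_zero]
  | coe z =>
    by_cases hz : z = 0
    · rw [hz, cinv_coe_zero, cinv_infty]
    · rw [cinv_coe_of_ne_zero hz, cinv_coe_of_ne_zero (inv_ne_zero hz), inv_inv]

lemma inv_ofReal_div_mul_exp (a b : ℝ) (w : ℂ) :
    (((a / b : ℝ) : ℂ) * Complex.exp w)⁻¹ = ((b / a : ℝ) : ℂ) * Complex.exp (-w) := by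
  rw [mul_inv, ← Complex.exp_neg, ← Complex.ofReal_inv, inv_div]

lemma zero_mem_srg_relInv {R : Set (H × H)} {u y₁ y₂ : H} (h₁ : (u, y₁) ∈ R) (h₂ : (u, y₂) ∈ R)
    (hy : y₁ ≠ y₂) : (0 : ℂ) ∈ srg (relInv R) :=
  ⟨y₁, u, y₂, u, h₁, h₂, hy, Or.inl (by simp)⟩

lemma inv_mem_srg_relInv {R : Set (H × H)} {z : ℂ} (hz : z ∈ srg R) (hz0 : z ≠ 0) :
    z⁻¹ ∈ srg (relInv R) := by
  obtain ⟨u₁, y₁, u₂, y₂, h₁, h₂, -, hz⟩ := hz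
  have hy : y₁ ≠ y₂ := by
    rintro rfl
    exact hz0 (by rcases hz with rfl | rfl <;> simp)
  refine ⟨y₁, u₁, y₂, u₂, h₁, h₂, hy, ?_⟩
  rw [angle_comm]
  rcases hz with rfl | rfl
  · exact Or.inr (inv_ofReal_div_mul_exp _ _ _)
  · exact Or.inl ((inv_ofReal_div_mul_exp _ _ _).trans (by rw [neg_neg]))

lemma exists_ne_of_zero_mem_srg {R : Set (H × H)} (h : (0 : ℂ) ∈ srg R) :
    ∃ u y₁ y₂, (u, y₁) ∈ relInv R ∧ (u, y₂) ∈ relInv R ∧ y₁ ≠ y₂ := by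
  obtain ⟨u₁, y₁, u₂, y₂, h₁, h₂, hu, hz⟩ := h
  have hun : ‖u₁ - u₂‖ ≠ 0 := by rwa [norm_ne_zero_iff, sub_ne_zero]
  have hy : y₁ = y₂ := by
    rcases hz with hz | hz <;>
      simpa [eq_comm (a := (0 : ℂ)), Complex.exp_ne_zero, hun, sub_eq_zero] using hz
  exact ⟨y₁, u₁, u₂, h₁, hy ▸ h₂, hu⟩

lemma cinv_mem_srgE_relInv {R : Set (H × H)} {z : ℂ} (hz : z ∈ srg R) :
    cinv (z : OnePoint ℂ) ∈ srgE (relInv R) := by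
  by_cases hz0 : z = 0
  · subst hz0
    exact Or.inr ⟨cinv_coe_zero, exists_ne_of_zero_mem_srg hz⟩
  · rw [cinv_coe_of_ne_zero hz0]
    exact Or.inl ⟨z⁻¹, inv_mem_srg_relInv hz hz0, rfl⟩

lemma cinv_image_srgE_subset (R : Set (H × H)) : cinv '' srgE R ⊆ srgE (relInv R) := by
  rintro _ ⟨w, hw, rfl⟩
  rcases hw with ⟨z, hz, rfl⟩ | ⟨rfl, u, y₁, y₂, h₁, h₂, hy⟩
  · exact cinv_mem_srgE_relInv hz
  · rw [cinv_infty]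
    exact Or.inl ⟨0, zero_mem_srg_relInv h₁ h₂ hy, rfl⟩

theorem srg_relInv (A : Set (H × H)) :
    srgE (relInv A) = cinv '' srgE A := by
  refine (cinv_image_srgE_subset A).antisymm' fun w hw => ⟨cinv w, ?_, cinv_involutive w⟩
  exact cinv_image_srgE_subset (relInv A) ⟨w, hw, rfl⟩
end

section
/- Let H be a real Hilbert space and A, B ⊆ H × H relations whose SRGs contain no point at infinity. If Ā ⊆ ℂ is any set containing SRG(A) and satisfying the chord property (for each z ∈ Ā, the segment joining z and its complex conjugate z̄ lies in Ā), then SRG(A + B) ⊆ Ā + SRG(B) := { a + b : a ∈ Ā, b ∈ SRG(B) }, where A + B := {(u, y + z) : (u, y) ∈ A, (u, z) ∈ B}. -/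
/-!
**Statement 5** (SRG sum rule).  Let `A, B ⊆ H × H` be relations whose SRGs contain no
point at infinity.  If `Ā ⊆ ℂ` contains `SRG(A)` and satisfies the chord property, then
`SRG(A + B) ⊆ Ā + SRG(B)` (pointwise sum of sets), where
`A + B := {(u, y + z) : (u, y) ∈ A, (u, z) ∈ B}`.
-/

open InnerProductGeometry OnePoint Pointwise

variable {H : Type*} [NormedAddCommGroup H] [InnerProductSpace ℝ H]

/-- Relational sum: `R + S = {(u, y + z) : (u, y) ∈ R, (u, z) ∈ S}`. -/
def relAdd (R S : Set (H × H)) : Set (H × H) :=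
  {p | ∃ y z, (p.1, y) ∈ R ∧ (p.1, z) ∈ S ∧ p.2 = y + z}

/-- A set `G ⊆ ℂ` satisfies the chord property if for each `z ∈ G` the segment between
`z` and its conjugate lies in `G`. -/
def ChordProperty (G : Set ℂ) : Prop :=
  ∀ z ∈ G, ∀ l ∈ Set.Icc (0 : ℝ) 1,
    (l : ℂ) * z + (1 - (l : ℂ)) * (starRingEnd ℂ) z ∈ G

/-!
For `U = u₁ - u₂ ≠ 0`, the SRG point `(‖Y‖ / ‖U‖) e^{i∠(U, Y)}` has real part `⟪U, Y⟫ / ‖U‖²`,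
which is additive in `Y`, and imaginary part `‖Y - proj_U Y‖ / ‖U‖`, which is subadditive by
the triangle inequality. Hence the point of `Y_A + Y_B` minus the point of `Y_B` has the real
part of the point of `Y_A` and an imaginary part of modulus at most that of the point of `Y_A`:
it lies on the chord through that point, so in `Ā`. Conjugate points are handled by conjugating,
which preserves a chord-closed set.
-/

open RealInnerProductSpace ComplexConjugate

/-- `(‖Y‖ / ‖U‖) e^{i∠(U, Y)}` in Cartesian form: the real part is the coefficient of the
projection of `Y` on `ℝ U`, the imaginary part the relative length of the rejection. -/
noncomputable def srgPoint (U Y : H) : ℂ :=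
  ⟨⟪U, Y⟫ / ‖U‖ ^ 2, ‖Y - (⟪U, Y⟫ / ‖U‖ ^ 2) • U‖ / ‖U‖⟩

lemma norm_div_norm_mul_cos_angle {U : H} (hU : U ≠ 0) (Y : H) :
    ‖Y‖ / ‖U‖ * Real.cos (angle U Y) = ⟪U, Y⟫ / ‖U‖ ^ 2 := by
  have hU' : ‖U‖ ≠ 0 := norm_ne_zero_iff.mpr hU
  rw [← cos_angle_mul_norm_mul_norm]
  field_simp

lemma norm_mul_sin_angle {U : H} (hU : U ≠ 0) (Y : H) :
    ‖Y‖ * Real.sin (angle U Y) = ‖Y - (⟪U, Y⟫ / ‖U‖ ^ 2) • U‖ := by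
  have hU' : ‖U‖ ≠ 0 := norm_ne_zero_iff.mpr hU
  refine (pow_left_inj₀ (mul_nonneg (norm_nonneg Y) (sin_angle_nonneg U Y))
    (norm_nonneg _) two_ne_zero).mp ?_
  have hcos := cos_angle_mul_norm_mul_norm U Y
  rw [mul_pow, Real.sin_sq, norm_sub_sq_real, real_inner_smul_right, norm_smul,
    Real.norm_eq_abs, mul_pow, sq_abs, real_inner_comm U Y, ← hcos]
  field_simp
  ring

lemma ofReal_mul_exp_angle {U : H} (hU : U ≠ 0) (Y : H) :
    ((‖Y‖ / ‖U‖ : ℝ) : ℂ) * Complex.exp (Complex.I * (angle U Y : ℝ)) = srgPoint U Y := by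
  rw [mul_comm Complex.I, Complex.exp_mul_I, ← Complex.ofReal_cos, ← Complex.ofReal_sin]
  apply Complex.ext
  · simpa [srgPoint, Complex.cos_ofReal_re] using norm_div_norm_mul_cos_angle hU Y
  · simp [srgPoint, ← norm_mul_sin_angle hU Y, div_mul_eq_mul_div, Complex.sin_ofReal_re]

lemma ofReal_mul_exp_neg_angle {U : H} (hU : U ≠ 0) (Y : H) :
    ((‖Y‖ / ‖U‖ : ℝ) : ℂ) * Complex.exp (-(Complex.I * (angle U Y : ℝ))) =
      conj (srgPoint U Y) := by
  rw [← ofReal_mul_exp_angle hU, map_mul, Complex.conj_ofReal, ← Complex.exp_conj, map_mul,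
    Complex.conj_I, Complex.conj_ofReal, neg_mul]

lemma mem_srg_iff {R : Set (H × H)} {w : ℂ} :
    w ∈ srg R ↔ ∃ u₁ y₁ u₂ y₂, (u₁, y₁) ∈ R ∧ (u₂, y₂) ∈ R ∧ u₁ ≠ u₂ ∧
      (w = srgPoint (u₁ - u₂) (y₁ - y₂) ∨ w = conj (srgPoint (u₁ - u₂) (y₁ - y₂))) := by
  refine exists₄_congr fun u₁ y₁ u₂ y₂ => and_congr_right' <| and_congr_right' <|
    and_congr_right fun hu => ?_
  rw [ofReal_mul_exp_angle (sub_ne_zero.mpr hu), ofReal_mul_exp_neg_angle (sub_ne_zero.mpr hu)]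

lemma srgPoint_re_add (U Y Z : H) :
    (srgPoint U (Y + Z)).re = (srgPoint U Y).re + (srgPoint U Z).re := by
  simp only [srgPoint, inner_add_right, add_div]

lemma abs_srgPoint_im_add_sub_le (U Y Z : H) :
    |(srgPoint U (Y + Z)).im - (srgPoint U Z).im| ≤ (srgPoint U Y).im := by
  have hsplit : Y + Z - (srgPoint U (Y + Z)).re • U =
      (Y - (srgPoint U Y).re • U) + (Z - (srgPoint U Z).re • U) := by
    rw [srgPoint_re_add, add_smul]; abel
  simp only [srgPoint] at hsplit ⊢
  rw [hsplit, ← sub_div, abs_div, abs_norm]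
  gcongr
  exact (abs_norm_sub_norm_le _ _).trans_eq (by rw [add_sub_cancel_right])

lemma ChordProperty.conj_mem {G : Set ℂ} (hG : ChordProperty G) {z : ℂ} (hz : z ∈ G) :
    conj z ∈ G := by
  simpa using hG z hz 0 (by simp)

lemma ChordProperty.mk_mem {G : Set ℂ} (hG : ChordProperty G) {z : ℂ} (hz : z ∈ G) {t : ℝ}
    (ht : |t| ≤ z.im) : (⟨z.re, t⟩ : ℂ) ∈ G := by
  rcases (abs_nonneg t).trans ht |>.eq_or_lt with him | him
  · have ht0 : t = 0 := abs_nonpos_iff.mp (him ▸ ht)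
    convert hz using 1
    exact Complex.ext rfl (ht0.trans him)
  · have hl : (t + z.im) / (2 * z.im) ∈ Set.Icc (0 : ℝ) 1 := by
      constructor
      · exact div_nonneg (by linarith [neg_abs_le t]) (by linarith)
      · rw [div_le_one (by linarith)]; linarith [le_abs_self t]
    convert hG z hz _ hl using 1
    apply Complex.ext <;>
      simp only [Complex.add_re, Complex.add_im, Complex.mul_re, Complex.mul_im, Complex.sub_re,
        Complex.sub_im, Complex.ofReal_re, Complex.ofReal_im, Complex.one_re, Complex.one_im,
        Complex.conj_re, Complex.conj_im] <;>
      field_simp <;> ring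

lemma ChordProperty.srgPoint_add_sub_mem {G : Set ℂ} (hG : ChordProperty G) {U Y : H}
    (hY : srgPoint U Y ∈ G) (Z : H) : srgPoint U (Y + Z) - srgPoint U Z ∈ G := by
  convert hG.mk_mem hY (abs_srgPoint_im_add_sub_le U Y Z) using 1
  apply Complex.ext
  · simp [srgPoint_re_add]
  · simp

theorem srg_sum_rule_general (A B : Set (H × H))
    (Abar : Set ℂ) (hAbar : srg A ⊆ Abar) (hchord : ChordProperty Abar) :
    srg (relAdd A B) ⊆ Abar + srg B := by
  intro w hw
  obtain ⟨u₁, p₁, u₂, p₂, ⟨y₁, z₁, hy₁, hz₁, rfl⟩, ⟨y₂, z₂, hy₂, hz₂, rfl⟩, hu, hw⟩ :=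
    mem_srg_iff.mp hw
  have hsum : y₁ + z₁ - (y₂ + z₂) = (y₁ - y₂) + (z₁ - z₂) := by abel
  have hA : srgPoint (u₁ - u₂) (y₁ - y₂) ∈ srg A :=
    mem_srg_iff.mpr ⟨u₁, y₁, u₂, y₂, hy₁, hy₂, hu, .inl rfl⟩
  have hdiff := hchord.srgPoint_add_sub_mem (hAbar hA) (z₁ - z₂)
  rw [← hsum] at hdiff
  rcases hw with rfl | rfl
  · exact ⟨_, hdiff, _, mem_srg_iff.mpr ⟨u₁, z₁, u₂, z₂, hz₁, hz₂, hu, .inl rfl⟩,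
      sub_add_cancel _ _⟩
  · exact ⟨_, hchord.conj_mem hdiff, _,
      mem_srg_iff.mpr ⟨u₁, z₁, u₂, z₂, hz₁, hz₂, hu, .inr rfl⟩, (map_add _ _ _).symm.trans (congrArg conj (sub_add_cancel _ _))⟩

theorem srg_sum_rule (A B : Set (H × H))
    (hA : (∞ : OnePoint ℂ) ∉ srgE A) (hB : (∞ : OnePoint ℂ) ∉ srgE B)
    (Abar : Set ℂ) (hAbar : srg A ⊆ Abar) (hchord : ChordProperty Abar) :
    srg (relAdd A B) ⊆ Abar + srg B :=
  srg_sum_rule_general A B Abar hAbar hchord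
end

section
/- (Incremental homotopy) Let H be a real Hilbert space and H₁, H₂ : H → H operators such that (i) H₁ and H₂ have finite incremental gain, and (ii) there exists γ > 0 such that for all τ ∈ [0, 1] and all u₁, u₂ in the domain of the feedback relation [H₁, τH₂], with yᵢ the (unique) output corresponding to uᵢ, one has ‖y₁ − y₂‖ ≤ γ‖u₁ − u₂‖ (in particular [H₁, τH₂] is single-valued on its domain). Then the domain of [H₁, H₂] is all of H, and [H₁, H₂] has incremental gain bound γ. -/
/-!
**Statement 6** (Incremental homotopy).  Let `H₁, H₂ : H → H` be operators on a real
Hilbert space such that (i) `H₁`, `H₂` have finite incremental gain, and (ii) there is a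
`γ > 0` such that for all `τ ∈ [0, 1]` and all inputs in the domain of the feedback
relation `[H₁, τH₂]`, the corresponding outputs satisfy `‖y₁ - y₂‖ ≤ γ ‖u₁ - u₂‖`.
Then the domain of `[H₁, H₂]` is all of `H`, and `[H₁, H₂]` has incremental gain bound `γ`.
-/

variable {H : Type*}

/-- The feedback relation `[H₁, τH₂] = {(u, y) : ∃! e, e = u - τ • H₂ y ∧ y = H₁ e}`. -/
def feedbackRel [Sub H] [SMul ℝ H] (H₁ H₂ : H → H) (τ : ℝ) : Set (H × H) :=
  {p | ∃! e, e = p.1 - τ • H₂ p.2 ∧ p.2 = H₁ e}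

lemma mem_feedbackRel_iff' [NormedAddCommGroup H] [InnerProductSpace ℝ H]
    (H₁ H₂ : H → H) (τ : ℝ) (u y : H) :
    (u, y) ∈ feedbackRel H₁ H₂ τ ↔ y = H₁ (u - τ • H₂ y) := by
  constructor
  · rintro ⟨e, ⟨he, hy⟩, -⟩; exact hy.trans (congrArg H₁ he)
  · intro h; exact ⟨u - τ • H₂ y, ⟨rfl, h⟩, fun e ⟨he, _⟩ => he⟩

theorem incremental_homotopy
    [NormedAddCommGroup H] [InnerProductSpace ℝ H] [CompleteSpace H]
    (H₁ H₂ : H → H)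
    (h₁ : ∃ γ₁ : ℝ, ∀ u₁ u₂ : H, ‖H₁ u₁ - H₁ u₂‖ ≤ γ₁ * ‖u₁ - u₂‖)
    (h₂ : ∃ γ₂ : ℝ, ∀ u₁ u₂ : H, ‖H₂ u₁ - H₂ u₂‖ ≤ γ₂ * ‖u₁ - u₂‖)
    (γ : ℝ) (hγ : 0 < γ)
    (hbound : ∀ τ ∈ Set.Icc (0 : ℝ) 1, ∀ u₁ y₁ u₂ y₂ : H,
      (u₁, y₁) ∈ feedbackRel H₁ H₂ τ → (u₂, y₂) ∈ feedbackRel H₁ H₂ τ →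
      ‖y₁ - y₂‖ ≤ γ * ‖u₁ - u₂‖) :
    (∀ u : H, ∃ y : H, (u, y) ∈ feedbackRel H₁ H₂ 1) ∧
    (∀ u₁ y₁ u₂ y₂ : H,
      (u₁, y₁) ∈ feedbackRel H₁ H₂ 1 → (u₂, y₂) ∈ feedbackRel H₁ H₂ 1 →
      ‖y₁ - y₂‖ ≤ γ * ‖u₁ - u₂‖) := by
  obtain ⟨γ₂, hγ₂⟩ := h₂
  set c : ℝ := max γ₂ 1 with hc
  have hc1 : (1 : ℝ) ≤ c := le_max_right _ _
  have hc0 : (0 : ℝ) < c := lt_of_lt_of_le one_pos hc1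
  have hH₂ : ∀ u₁ u₂ : H, ‖H₂ u₁ - H₂ u₂‖ ≤ c * ‖u₁ - u₂‖ := fun u₁ u₂ =>
    (hγ₂ u₁ u₂).trans (mul_le_mul_of_nonneg_right (le_max_left _ _) (norm_nonneg _))
  set δ : ℝ := (2 * γ * c)⁻¹ with hδdef
  have hδ0 : 0 < δ := by positivity
  -- step lemma: solvability propagates along [0,1] in steps of size δ
  have step : ∀ τ ∈ Set.Icc (0:ℝ) 1, ∀ τ' ∈ Set.Icc (0:ℝ) 1, |τ' - τ| ≤ δ →
      (∀ u : H, ∃ y, (u, y) ∈ feedbackRel H₁ H₂ τ) →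
      (∀ u : H, ∃ y, (u, y) ∈ feedbackRel H₁ H₂ τ') := by
    intro τ hτ τ' hτ' hdist hS u
    choose F hF using hS
    have hFlip : ∀ v₁ v₂ : H, ‖F v₁ - F v₂‖ ≤ γ * ‖v₁ - v₂‖ := fun v₁ v₂ =>
      hbound τ hτ v₁ (F v₁) v₂ (F v₂) (hF v₁) (hF v₂)
    set d : ℝ := τ' - τ with hd
    set G : H → H := fun y => F (u - d • H₂ y) with hG
    have hlip : LipschitzWith (1/2 : NNReal) G := by
      apply LipschitzWith.of_dist_le_mul
      intro y₁ y₂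
      have h1 : dist (G y₁) (G y₂) = ‖F (u - d • H₂ y₁) - F (u - d • H₂ y₂)‖ := by
        simp [hG, dist_eq_norm]
      have h2 : ‖(u - d • H₂ y₁) - (u - d • H₂ y₂)‖ = |d| * ‖H₂ y₁ - H₂ y₂‖ := by
        rw [sub_sub_sub_cancel_left, ← smul_sub, norm_smul, Real.norm_eq_abs, norm_sub_rev]
      have h3 : ‖F (u - d • H₂ y₁) - F (u - d • H₂ y₂)‖ ≤ γ * (|d| * (c * ‖y₁ - y₂‖)) := by
        refine (hFlip _ _).trans ?_
        rw [h2]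
        exact mul_le_mul_of_nonneg_left
          (mul_le_mul_of_nonneg_left (hH₂ y₁ y₂) (abs_nonneg _)) hγ.le
      have h4 : γ * (|d| * (c * ‖y₁ - y₂‖)) ≤ (1/2) * ‖y₁ - y₂‖ := by
        have hdle : |d| ≤ δ := hdist
        have : γ * |d| * c ≤ 1/2 := by
          have : γ * |d| * c ≤ γ * δ * c :=
            mul_le_mul_of_nonneg_right (mul_le_mul_of_nonneg_left hdle hγ.le) hc0.le
          have heq : γ * δ * c = 1/2 := by
            rw [hδdef]; field_simp [hγ.ne', hc0.ne']
          exact this.trans heq.le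
        calc γ * (|d| * (c * ‖y₁ - y₂‖)) = (γ * |d| * c) * ‖y₁ - y₂‖ := by ring
          _ ≤ (1/2) * ‖y₁ - y₂‖ := mul_le_mul_of_nonneg_right this (norm_nonneg _)
      rw [h1, dist_eq_norm]
      push_cast
      exact h3.trans h4
    have hcontr : ContractingWith (1/2 : NNReal) G := ⟨one_half_lt_one, hlip⟩
    set y : H := hcontr.fixedPoint G with hy
    have hfix : G y = y := hcontr.fixedPoint_isFixedPt
    refine ⟨y, (mem_feedbackRel_iff' H₁ H₂ τ' u y).2 ?_⟩
    have hmem := (mem_feedbackRel_iff' H₁ H₂ τ (u - d • H₂ y) (F (u - d • H₂ y))).1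
      (hF (u - d • H₂ y))
    have hGy : F (u - d • H₂ y) = y := hfix
    rw [hGy] at hmem
    have hdt : d + τ = τ' := by rw [hd]; ring
    have harg : u - d • H₂ y - τ • H₂ y = u - τ' • H₂ y := by
      rw [sub_sub, ← add_smul, hdt]
    rw [harg] at hmem
    exact hmem
  -- induction on number of steps
  have ind : ∀ n : ℕ, ∀ τ ∈ Set.Icc (0:ℝ) 1, τ ≤ (n : ℝ) * δ →
      ∀ u : H, ∃ y, (u, y) ∈ feedbackRel H₁ H₂ τ := by
    intro n
    induction n with
    | zero =>
      intro τ hτ hle u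
      have hτ0 : τ = 0 := le_antisymm (by simpa using hle) hτ.1
      subst hτ0
      exact ⟨H₁ u, (mem_feedbackRel_iff' H₁ H₂ 0 u (H₁ u)).2 (by simp)⟩
    | succ n ih =>
      intro τ hτ hle u
      by_cases hcase : τ ≤ (n : ℝ) * δ
      · exact ih τ hτ hcase u
      · push_neg at hcase
        set τ₀ : ℝ := max (τ - δ) 0 with hτ₀def
        have hτ₀mem : τ₀ ∈ Set.Icc (0:ℝ) 1 :=
          ⟨le_max_right _ _, max_le (by linarith [hτ.2]) zero_le_one⟩
        have hτ₀le : τ₀ ≤ (n : ℝ) * δ := by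
          push_cast at hle
          exact max_le (by linarith) (by positivity)
        have habs : |τ - τ₀| ≤ δ := by
          rw [abs_le]
          have h5 : τ - δ ≤ τ₀ := le_max_left _ _
          have h6 : τ₀ ≤ τ := max_le (by linarith) hτ.1
          constructor <;> linarith
        exact step τ₀ hτ₀mem τ hτ habs (fun v => ih τ₀ hτ₀mem hτ₀le v) u
  obtain ⟨n, hn⟩ := exists_nat_ge (1 / δ)
  have h1n : (1 : ℝ) ≤ (n : ℝ) * δ := by
    rw [div_le_iff₀ hδ0] at hn
    linarith
  refine ⟨fun u => ind n 1 ⟨zero_le_one, le_refl 1⟩ h1n u, ?_⟩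
  intro u₁ y₁ u₂ y₂ hm₁ hm₂
  exact hbound 1 ⟨zero_le_one, le_refl 1⟩ u₁ y₁ u₂ y₂ hm₁ hm₂
end

section
/- Let H be a real Hilbert space and suppose H₁, H₂ : H → H have bounded incremental gain and strictly separated SRGs, i.e. there exists r_min > 0 such that dist(SRG(H₁)⁻¹, −τ·chord(SRG(H₂))) ≥ r_min for all τ ∈ (0, 1]. Then the feedback interconnection [H₁, H₂] maps all of H to H (for every u there is a unique pair (e, y) with e = u − H₂(y), y = H₁(e)) and has bounded incremental gain. -/
/-!
Write `G = H₂ ∘ H₁`; the loop equations say exactly that `e + G e = u` and `y = H₁ e`.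
For increments `Δe`, `Δy = H₁ e₁ - H₁ e₂`, `Δv = H₂ (H₁ e₁) - H₂ (H₁ e₂)` with angles
`θ = ∠(Δe, Δy)` and `φ = ∠(Δy, Δv)`, the points `z = (‖Δy‖/‖Δe‖) e^{iθ}` of `SRG(H₁)` and
`w = (‖Δv‖/‖Δy‖) e^{iφ}` of `SRG(H₂)` satisfy
`‖Δy‖ · |z⁻¹ + τ w| = |‖Δe‖ e^{-iθ} + τ ‖Δv‖ e^{iφ}| ≤ ‖Δe + τ Δv‖`,
the inequality being the triangle inequality `∠(Δe, Δv) ≤ θ + φ` for angles. Separation thus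
gives `r_min ‖Δy‖ ≤ ‖Δe + τ Δv‖`. At `τ = 1` this is the gain bound `1 / r_min`. For all
`τ ∈ [0, 1]` it makes `e ↦ e + τ G e` antilipschitz with a constant independent of `τ`, and as
`G` is Lipschitz, the Banach fixed point theorem carries surjectivity from `τ = 0` to `τ = 1` in
steps of fixed length.
-/

open InnerProductGeometry

variable {H : Type*} [NormedAddCommGroup H] [InnerProductSpace ℝ H]

/-- The chord-property closure: the smallest superset with the chord property. -/
def chordClosure (G : Set ℂ) : Set ℂ := ⋂₀ {S | G ⊆ S ∧ ChordProperty S}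

/-- The graph of an operator. -/
def graphOf (F : H → H) : Set (H × H) := {p | p.2 = F p.1}

open Function Set Complex
open scoped NNReal RealInnerProductSpace

section Continuation

variable {E : Type*} [NormedAddCommGroup E] [CompleteSpace E]

theorem surjective_add_of_antilipschitzWith {T P : E → E} {K L : ℝ≥0}
    (hT : AntilipschitzWith K T) (hTs : Surjective T) (hP : LipschitzWith L P)
    (hKL : K * L < 1) : Surjective (T + P) := by
  intro u
  -- a fixed point of `x ↦ T⁻¹ (u - P x)` solves `T x + P x = u`
  have hΦ : ContractingWith (K * L) (fun x => surjInv hTs (u - P x)) :=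
    ⟨hKL, (hT.to_rightInverse (rightInverse_surjInv hTs)).comp <|
      LipschitzWith.of_dist_le_mul fun x y => by
        rw [dist_sub_left]; exact hP.dist_le_mul x y⟩
  set x := hΦ.fixedPoint
  have hfix : surjInv hTs (u - P x) = x := hΦ.fixedPoint_isFixedPt
  have hx : T x = u - P x := by
    rw [← hfix, surjInv_eq hTs, hfix]
  exact ⟨x, by simp [hx]⟩

theorem surjective_add_of_antilipschitzWith_add_smul [NormedSpace ℝ E] {G : E → E}
    {K L : ℝ≥0} (hG : LipschitzWith L G)
    (hT : ∀ τ ∈ Icc (0 : ℝ) 1, AntilipschitzWith K (fun x => x + τ • G x)) :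
    Surjective (fun x => x + G x) := by
  set T : ℝ → E → E := fun τ x => x + τ • G x with hT_def
  obtain ⟨δ, hδ, hKLδ⟩ := exists_pos_mul_lt one_pos ((K : ℝ) * L)
  have step : ∀ τ ∈ Icc (0 : ℝ) 1, ∀ σ, |σ - τ| ≤ δ → Surjective (T τ) → Surjective (T σ) := by
    intro τ hτ σ hστ hs
    have hsplit : T σ = T τ + fun x => (σ - τ) • G x := by
      ext x; simp only [hT_def, Pi.add_apply, sub_smul]; abel
    rw [hsplit]
    refine surjective_add_of_antilipschitzWith (hT τ hτ) hs ((lipschitzWith_smul _).comp hG) ?_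
    rw [← NNReal.coe_lt_coe]
    push_cast
    rw [Real.norm_eq_abs]
    calc (K : ℝ) * (|σ - τ| * L) = K * L * |σ - τ| := by ring
      _ ≤ K * L * δ := by gcongr
      _ < 1 := hKLδ
  have hsurj : ∀ n : ℕ, Surjective (T (min 1 (n * δ))) := by
    intro n
    induction n with
    | zero => exact fun u => ⟨u, by simp [hT_def]⟩
    | succ n ih =>
      refine step _ ⟨by positivity, min_le_left _ _⟩ _ ?_ ih
      refine (abs_min_sub_min_le_max _ _ _ _).trans_eq ?_
      rw [sub_self, abs_zero, show ((n + 1 : ℕ) : ℝ) * δ - n * δ = δ by push_cast; ring,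
        abs_of_pos hδ, max_eq_right hδ.le]
  obtain ⟨n, hn⟩ := exists_nat_ge δ⁻¹
  have h1 : min 1 (n * δ) = 1 := min_eq_left (by rwa [inv_le_iff_one_le_mul₀ hδ] at hn)
  simpa [hT_def, h1] using hsurj n

end Continuation

theorem cos_angle_add_angle_le_cos_angle (x y z : H) :
    Real.cos (angle x y + angle y z) ≤ Real.cos (angle x z) := by
  rcases le_total (angle x y + angle y z) Real.pi with h | h
  · exact Real.cos_le_cos_of_nonneg_of_le_pi (angle_nonneg x z) h
      (angle_le_angle_add_angle x y z)
  · have h' := angle_le_angle_add_angle x (-y) z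
    rw [angle_neg_right, angle_neg_left] at h'
    rw [← Real.cos_two_pi_sub]
    exact Real.cos_le_cos_of_nonneg_of_le_pi (angle_nonneg x z) (by linarith) (by linarith)

theorem cos_angle_add_angle_mul_norm_mul_norm_le_inner (x y z : H) :
    Real.cos (angle x y + angle y z) * (‖x‖ * ‖z‖) ≤ ⟪x, z⟫ := by
  rw [← cos_angle_mul_norm_mul_norm]
  exact mul_le_mul_of_nonneg_right (cos_angle_add_angle_le_cos_angle x y z) (by positivity)

theorem norm_sq_ofReal_mul_exp_neg_add_ofReal_mul_exp (a b θ φ : ℝ) :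
    ‖(a : ℂ) * exp (-(I * θ)) + b * exp (I * φ)‖ ^ 2
      = a ^ 2 + b ^ 2 + 2 * (a * b * Real.cos (θ + φ)) := by
  rw [Complex.sq_norm, normSq_apply]
  simp only [add_re, add_im, mul_re, mul_im, ofReal_re, ofReal_im, exp_re, exp_im, neg_re,
    neg_im, I_re, I_im, mul_zero, zero_mul, sub_zero, one_mul, neg_zero, zero_add, Real.exp_zero,
    Real.cos_neg, Real.sin_neg, Real.cos_add]
  linear_combination a ^ 2 * Real.sin_sq_add_cos_sq θ + b ^ 2 * Real.sin_sq_add_cos_sq φ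

theorem norm_ofReal_mul_exp_neg_angle_add_le (x y z : H) {τ : ℝ} (hτ : 0 ≤ τ) :
    ‖(‖x‖ : ℂ) * exp (-(I * angle x y)) + ((τ * ‖z‖ : ℝ) : ℂ) * exp (I * angle y z)‖
      ≤ ‖x + τ • z‖ := by
  rw [← pow_le_pow_iff_left₀ (norm_nonneg _) (norm_nonneg _) two_ne_zero,
    norm_sq_ofReal_mul_exp_neg_add_ofReal_mul_exp, norm_add_sq_real, norm_smul,
    real_inner_smul_right, Real.norm_of_nonneg hτ]
  have h := mul_le_mul_of_nonneg_left (cos_angle_add_angle_mul_norm_mul_norm_le_inner x y z) hτ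
  nlinarith

theorem subset_chordClosure (G : Set ℂ) : G ⊆ chordClosure G :=
  fun _ hz => mem_sInter.2 fun _ hS => hS.1 hz

theorem ofReal_mul_exp_mem_srg_graphOf (F : H → H) {u₁ u₂ : H} (h : u₁ ≠ u₂) :
    ((‖F u₁ - F u₂‖ / ‖u₁ - u₂‖ : ℝ) : ℂ) * exp (I * angle (u₁ - u₂) (F u₁ - F u₂))
      ∈ srg (graphOf F) :=
  ⟨u₁, F u₁, u₂, F u₂, rfl, rfl, h, Or.inl rfl⟩

def SRGSeparated (H₁ H₂ : H → H) (r : ℝ) : Prop :=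
  ∀ τ ∈ Ioc (0 : ℝ) 1, ∀ z ∈ srg (graphOf H₁), z ≠ 0 →
    ∀ w ∈ chordClosure (srg (graphOf H₂)), r ≤ ‖z⁻¹ - (-((τ : ℂ) * w))‖

namespace SRGSeparated

variable {H₁ H₂ : H → H} {r : ℝ}

theorem mul_norm_sub_le (hsep : SRGSeparated H₁ H₂ r) {τ : ℝ} (hτ : τ ∈ Ioc (0 : ℝ) 1)
    (e₁ e₂ : H) :
    r * ‖H₁ e₁ - H₁ e₂‖ ≤ ‖(e₁ - e₂) + τ • (H₂ (H₁ e₁) - H₂ (H₁ e₂))‖ := by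
  rcases eq_or_ne (H₁ e₁) (H₁ e₂) with hy | hy
  · simp [hy]
  have he : e₁ ≠ e₂ := fun h => hy (congrArg H₁ h)
  set Δe := e₁ - e₂
  set Δy := H₁ e₁ - H₁ e₂
  set Δv := H₂ (H₁ e₁) - H₂ (H₁ e₂)
  have hΔe : ‖Δe‖ ≠ 0 := (norm_sub_pos_iff.2 he).ne'
  have hΔy : ‖Δy‖ ≠ 0 := (norm_sub_pos_iff.2 hy).ne'
  set z := ((‖Δy‖ / ‖Δe‖ : ℝ) : ℂ) * exp (I * angle Δe Δy) with hz_def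
  set w := ((‖Δv‖ / ‖Δy‖ : ℝ) : ℂ) * exp (I * angle Δy Δv) with hw_def
  have hz : z ∈ srg (graphOf H₁) := ofReal_mul_exp_mem_srg_graphOf H₁ he
  have hw : w ∈ chordClosure (srg (graphOf H₂)) :=
    subset_chordClosure _ (ofReal_mul_exp_mem_srg_graphOf H₂ hy)
  have hz0 : z ≠ 0 := mul_ne_zero (by exact_mod_cast div_ne_zero hΔy hΔe) (exp_ne_zero _)
  have hscale : (‖Δy‖ : ℂ) * (z⁻¹ - -(τ * w)) =
      (‖Δe‖ : ℂ) * exp (-(I * angle Δe Δy)) + ((τ * ‖Δv‖ : ℝ) : ℂ) * exp (I * angle Δy Δv) := by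
    have : (‖Δy‖ : ℂ) ≠ 0 := by exact_mod_cast hΔy
    have : (‖Δe‖ : ℂ) ≠ 0 := by exact_mod_cast hΔe
    rw [hz_def, hw_def, mul_inv, exp_neg]
    push_cast
    field_simp
    ring
  calc r * ‖Δy‖ ≤ ‖z⁻¹ - -(τ * w)‖ * ‖Δy‖ :=
        mul_le_mul_of_nonneg_right (hsep τ hτ z hz hz0 w hw) (norm_nonneg _)
    _ = ‖(‖Δy‖ : ℂ) * (z⁻¹ - -(τ * w))‖ := by rw [norm_mul, norm_real, norm_norm, mul_comm]
    _ ≤ ‖Δe + τ • Δv‖ := hscale ▸ norm_ofReal_mul_exp_neg_angle_add_le Δe Δy Δv hτ.1.le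

theorem antilipschitzWith_add_smul (hsep : SRGSeparated H₁ H₂ r) (hr : 0 < r) {K : ℝ≥0}
    (hH₂ : LipschitzWith K H₂) {τ : ℝ} (hτ : τ ∈ Icc (0 : ℝ) 1) :
    AntilipschitzWith (1 + K / r.toNNReal) (fun e => e + τ • H₂ (H₁ e)) := by
  refine AntilipschitzWith.of_le_mul_dist fun e₁ e₂ => ?_
  push_cast
  rw [Real.coe_toNNReal _ hr.le]
  have hKr : 0 ≤ (K : ℝ) / r := by positivity
  rcases hτ.1.eq_or_lt with rfl | hτ0
  · simp only [zero_smul, add_zero]; nlinarith [dist_nonneg (x := e₁) (y := e₂)]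
  set Δy := H₁ e₁ - H₁ e₂
  set Δv := H₂ (H₁ e₁) - H₂ (H₁ e₂)
  set T := (e₁ - e₂) + τ • Δv
  have hT : dist (e₁ + τ • H₂ (H₁ e₁)) (e₂ + τ • H₂ (H₁ e₂)) = ‖T‖ := by
    rw [dist_eq_norm]; congr 1; simp only [T, Δv, smul_sub]; abel
  have hsepT : r * ‖Δy‖ ≤ ‖T‖ := hsep.mul_norm_sub_le ⟨hτ0, hτ.2⟩ e₁ e₂
  have hΔv : τ * ‖Δv‖ ≤ K * ‖Δy‖ :=
    calc τ * ‖Δv‖ ≤ ‖Δv‖ := mul_le_of_le_one_left (norm_nonneg _) hτ.2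
      _ ≤ K * ‖Δy‖ := hH₂.norm_sub_le _ _
  rw [hT, dist_eq_norm]
  have hKr' : K / r * (r * ‖Δy‖) = K * ‖Δy‖ := by field_simp
  calc ‖e₁ - e₂‖ = ‖T - τ • Δv‖ := by simp only [T, add_sub_cancel_right]
    _ ≤ ‖T‖ + τ * ‖Δv‖ :=
        (norm_sub_le _ _).trans_eq (by rw [norm_smul, Real.norm_of_nonneg hτ.1])
    _ ≤ ‖T‖ + K / r * (r * ‖Δy‖) := by linarith
    _ ≤ (1 + K / r) * ‖T‖ := by nlinarith

end SRGSeparated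

theorem srg_separation_stability [CompleteSpace H] (H₁ H₂ : H → H)
    (h₁ : ∃ γ₁ : ℝ, ∀ u₁ u₂ : H, ‖H₁ u₁ - H₁ u₂‖ ≤ γ₁ * ‖u₁ - u₂‖)
    (h₂ : ∃ γ₂ : ℝ, ∀ u₁ u₂ : H, ‖H₂ u₁ - H₂ u₂‖ ≤ γ₂ * ‖u₁ - u₂‖)
    (rmin : ℝ) (hrmin : 0 < rmin)
    (hsep : ∀ τ ∈ Set.Ioc (0 : ℝ) 1, ∀ z ∈ srg (graphOf H₁), z ≠ 0 →
      ∀ w ∈ chordClosure (srg (graphOf H₂)),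
        rmin ≤ ‖z⁻¹ - (-((τ : ℂ) * w))‖) :
    (∀ u : H, ∃! p : H × H, p.1 = u - H₂ p.2 ∧ p.2 = H₁ p.1) ∧
    (∃ γ : ℝ, ∀ u₁ e₁ y₁ u₂ e₂ y₂ : H,
      e₁ = u₁ - H₂ y₁ → y₁ = H₁ e₁ → e₂ = u₂ - H₂ y₂ → y₂ = H₁ e₂ →
      ‖y₁ - y₂‖ ≤ γ * ‖u₁ - u₂‖) := by
  obtain ⟨γ₁, hγ₁⟩ := h₁
  obtain ⟨γ₂, hγ₂⟩ := h₂
  have hH₁ : LipschitzWith γ₁.toNNReal H₁ :=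
    LipschitzWith.of_dist_le' fun u₁ u₂ => by simpa only [dist_eq_norm] using hγ₁ u₁ u₂
  have hH₂ : LipschitzWith γ₂.toNNReal H₂ :=
    LipschitzWith.of_dist_le' fun u₁ u₂ => by simpa only [dist_eq_norm] using hγ₂ u₁ u₂
  replace hsep : SRGSeparated H₁ H₂ rmin := hsep
  have hanti := fun τ (hτ : τ ∈ Icc (0 : ℝ) 1) => hsep.antilipschitzWith_add_smul hrmin hH₂ hτ
  have hinj : Injective fun e => e + H₂ (H₁ e) := by
    simpa using (hanti 1 ⟨zero_le_one, le_rfl⟩).injective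
  have hsurj : Surjective fun e => e + H₂ (H₁ e) :=
    surjective_add_of_antilipschitzWith_add_smul (G := H₂ ∘ H₁) (hH₂.comp hH₁) hanti
  refine ⟨fun u => ?_, rmin⁻¹, fun u₁ e₁ y₁ u₂ e₂ y₂ he₁ hy₁ he₂ hy₂ => ?_⟩
  · obtain ⟨e, he⟩ := hsurj u
    refine ⟨(e, H₁ e), ⟨eq_sub_of_add_eq he, rfl⟩, ?_⟩
    rintro ⟨e', y'⟩ ⟨he' : e' = u - H₂ y', hy' : y' = H₁ e'⟩
    have hsame : e' = e := hinj <| by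
      change e' + H₂ (H₁ e') = e + H₂ (H₁ e)
      rw [← hy', he', sub_add_cancel]
      exact he.symm
    rw [hy', hsame]
  · have h := hsep.mul_norm_sub_le (τ := 1) ⟨one_pos, le_rfl⟩ e₁ e₂
    rw [one_smul, ← hy₁, ← hy₂, show (e₁ - e₂) + (H₂ y₁ - H₂ y₂) = u₁ - u₂ by
      rw [he₁, he₂]; abel] at h
    rwa [inv_mul_eq_div, le_div_iff₀' hrmin]
end

section
/- Let L² := L²([0,∞); ℝⁿ) and L₂e the space of measurable functions u : [0,∞) → ℝⁿ with P_T u ∈ L² for all T > 0, where P_T truncates a function to zero on [T, ∞). Suppose (i) H₁, H₂ : L² → L² are causal (P_T ∘ Hᵢ ∘ P_T = P_T ∘ Hᵢ for all T > 0) and have finite gain with zero offset (‖Hᵢ(u)‖ ≤ γᵢ‖u‖ for some γᵢ > 0 and all u ∈ L²); (ii) for all τ ∈ (0, 1], the feedback interconnection [H₁, τH₂] is well-posed (for every u ∈ L₂e there exist unique e, y ∈ L₂e with e = u − τH₂(y), y = H₁(e), where H₁, H₂ are extended causally to L₂e) and the resulting map u ↦ y on L₂e is causal; (iii) there exists γ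 > 0 such that for all τ ∈ [0, 1] and all u₁, u₂ in the domain of [H₁, τH₂] (as a relation on L² × L²), the outputs satisfy ‖y₁ − y₂‖ ≤ γ‖u₁ − u₂‖. Then [H₁, H₂] maps all of L² to L² and has finite incremental gain. -/
/-!
**Statement 12** (Non-incremental homotopy with well-posedness).  Signals are functions
`ℝ → ℝⁿ` considered with respect to the measure `μ₀ = Lebesgue restricted to [0, ∞)`;
`L²` membership is `Memℒp · 2 μ₀`; the truncation `P_T` sets a function to zero on
`[T, ∞)`; the extended space membership `InL2e u` requires `P_T u ∈ L²` for all `T > 0`.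
Operators act on functions and respect a.e. equality (so they descend to equivalence
classes).  `H₁e, H₂e` are the causal extensions of `H₁, H₂` to the extended space
(characterized by agreeing with `Hᵢ` on `L²` and the causal-extension property).
Under (i) causality and finite gain with zero offset of `H₁, H₂`;
(ii) well-posedness and causality of the closed loop `[H₁, τH₂]` on the extended space
for all `τ ∈ (0, 1]`; and (iii) a uniform incremental bound `γ` on `[H₁, τH₂]` for
`τ ∈ [0, 1]`: the feedback interconnection `[H₁, H₂]` maps all of `L²` to `L²` and has
finite incremental gain.
-/

open MeasureTheory

noncomputable section

variable {n : ℕ}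

/-- `ℝⁿ`. -/
abbrev En (n : ℕ) := EuclideanSpace ℝ (Fin n)

/-- Lebesgue measure restricted to `[0, ∞)`. -/
def mu0 : Measure ℝ := volume.restrict (Set.Ici 0)

/-- Truncation `P_T`: sets a signal to zero on `[T, ∞)`. -/
def trunc (T : ℝ) (u : ℝ → En n) : ℝ → En n := Set.indicator (Set.Iio T) u

/-- `L²` membership. -/
def InL2 (u : ℝ → En n) : Prop := MemLp u 2 mu0

/-- Extended-space membership: every truncation is in `L²`. -/
def InL2e (u : ℝ → En n) : Prop := ∀ T > 0, InL2 (trunc T u)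

/-- Membership in the feedback relation `[H₁, τH₂]` on `L² × L²`: there is a unique
(up to a.e. equality) error signal `e ∈ L²` with `e = u - τ H₂ y` and `y = H₁ e`. -/
def FbMem (H₁ H₂ : (ℝ → En n) → (ℝ → En n)) (τ : ℝ) (u y : ℝ → En n) : Prop :=
  InL2 u ∧ InL2 y ∧ ∃ e, InL2 e ∧ e =ᵐ[mu0] u - τ • H₂ y ∧ y =ᵐ[mu0] H₁ e ∧
    ∀ e', InL2 e' → e' =ᵐ[mu0] u - τ • H₂ y → y =ᵐ[mu0] H₁ e' → e' =ᵐ[mu0] e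

/-!
Along the homotopy `τ ↦ [H₁, τH₂]` the closed loop is total on `L²` at `τ = 0`, and totality
propagates by steps of size `δ` with `γ γ₂ δ < 1`. Given `u ∈ L²`, well-posedness at `τ + δ`
yields an extended solution `y`; it also solves the loop at `τ` with input
`v = u - δ H₂ y`. Causality lets us replace `v` by its truncation `P_T v ∈ L²`, where the
loop at `τ` has an `L²` solution with the same truncation as `y`, so the incremental
bound `γ` gives `‖P_T y‖ ≤ γ (‖u‖ + δ γ₂ ‖P_T y‖)`. Hence `‖P_T y‖` is bounded uniformly
in `T` and `y ∈ L²`.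
-/

open Filter
open scoped ENNReal

lemma trunc_apply (T : ℝ) (u : ℝ → En n) (t : ℝ) :
    trunc T u t = if t < T then u t else 0 := by
  simp [trunc, Set.indicator_apply]

lemma trunc_trunc_self (T : ℝ) (u : ℝ → En n) : trunc T (trunc T u) = trunc T u := by
  simp [trunc, Set.indicator_indicator]

lemma trunc_sub (T : ℝ) (u v : ℝ → En n) : trunc T (u - v) = trunc T u - trunc T v :=
  Set.indicator_sub _ u v

lemma trunc_smul (T c : ℝ) (u : ℝ → En n) : trunc T (c • u) = c • trunc T u :=
  Set.indicator_const_smul _ c u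

lemma eLpNorm_trunc_le (T : ℝ) (u : ℝ → En n) : eLpNorm (trunc T u) 2 mu0 ≤ eLpNorm u 2 mu0 :=
  eLpNorm_indicator_le u

lemma Filter.EventuallyEq.trunc {u v : ℝ → En n} (T : ℝ) (h : u =ᵐ[mu0] v) :
    _root_.trunc T u =ᵐ[mu0] _root_.trunc T v := by
  filter_upwards [h] with t ht
  simp [trunc_apply, ht]

lemma InL2.trunc {u : ℝ → En n} (hu : InL2 u) (T : ℝ) : InL2 (trunc T u) :=
  MemLp.indicator measurableSet_Iio hu

lemma InL2.inL2e {u : ℝ → En n} (hu : InL2 u) : InL2e u :=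
  fun T _ => hu.trunc T

lemma InL2e.sub {u v : ℝ → En n} (hu : InL2e u) (hv : InL2e v) : InL2e (u - v) := by
  intro T hT
  rw [InL2, trunc_sub]
  exact (hu T hT).sub (hv T hT)

lemma InL2e.const_smul {u : ℝ → En n} (hu : InL2e u) (c : ℝ) : InL2e (c • u) := by
  intro T hT
  rw [InL2, trunc_smul]
  exact (hu T hT).const_smul c

lemma inL2_of_forall_eLpNorm_trunc_le {y : ℝ → En n} {B : ℝ≥0∞} (hy : InL2e y) (hB : B ≠ ∞)
    (h : ∀ T > 0, eLpNorm (trunc T y) 2 mu0 ≤ B) : InL2 y := by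
  have hmeas (k : ℕ) : AEStronglyMeasurable (trunc (k + 1) y) mu0 := (hy _ k.cast_add_one_pos).1
  have hlim : ∀ t, Tendsto (fun k : ℕ => trunc (k + 1) y t) atTop (nhds (y t)) := fun t =>
    tendsto_atTop_of_eventually_const (i₀ := ⌈t⌉₊) fun k hk => by
      have : t < k + 1 := (Nat.le_ceil t).trans_lt (by exact_mod_cast Nat.lt_succ_of_le hk)
      simp [trunc_apply, this]
  have hnorm : eLpNorm y 2 mu0 ≤ B :=
    (Lp.eLpNorm_lim_le_liminf_eLpNorm hmeas y (.of_forall hlim)).trans <|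
      liminf_le_of_frequently_le' <| .of_forall fun k => h _ k.cast_add_one_pos
  exact ⟨aestronglyMeasurable_of_tendsto_ae atTop hmeas (.of_forall hlim),
    hnorm.trans_lt hB.lt_top⟩

lemma ENNReal.le_div_of_le_add_mul {x a c : ℝ≥0∞} (hx : x ≠ ∞) (hc : c < 1)
    (h : x ≤ a + c * x) : x ≤ a / (1 - c) := by
  rw [ENNReal.le_div_iff_mul_le (.inl (tsub_pos_of_lt hc).ne')
    (.inl (ENNReal.sub_ne_top ENNReal.one_ne_top)), ENNReal.mul_sub fun _ _ => hx, mul_one,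
    tsub_le_iff_right, mul_comm]
  exact h

section Feedback

variable {H₁ H₂ H H₁e H₂e He : (ℝ → En n) → (ℝ → En n)}

def HasL2Gain (H : (ℝ → En n) → (ℝ → En n)) (γ : ℝ) : Prop :=
  ∀ u, InL2 u → eLpNorm (H u) 2 mu0 ≤ ENNReal.ofReal γ * eLpNorm u 2 mu0

structure IsCausalExtension (H He : (ℝ → En n) → (ℝ → En n)) : Prop where
  inL2e : ∀ u, InL2e u → InL2e (He u)
  ae_eq_of_inL2 : ∀ u, InL2 u → He u =ᵐ[mu0] H u
  causal : ∀ T > 0, ∀ u, InL2e u → trunc T (He u) =ᵐ[mu0] trunc T (He (trunc T u))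

def ClosedLoopCausal (H₁e H₂e : (ℝ → En n) → (ℝ → En n)) (τ : ℝ) : Prop :=
  ∀ T > 0, ∀ u e y e' y',
    InL2e u → InL2e e → InL2e y →
    e =ᵐ[mu0] u - τ • H₂e y → y =ᵐ[mu0] H₁e e →
    InL2e e' → InL2e y' →
    e' =ᵐ[mu0] trunc T u - τ • H₂e y' → y' =ᵐ[mu0] H₁e e' →
    trunc T y' =ᵐ[mu0] trunc T y

def FbTotal (H₁ H₂ : (ℝ → En n) → (ℝ → En n)) (τ : ℝ) : Prop :=
  ∀ u, InL2 u → ∃ y, FbMem H₁ H₂ τ u y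

lemma HasL2Gain.ae_eq_zero {γ : ℝ} (hg : HasL2Gain H γ) (h0 : InL2 (H 0)) : H 0 =ᵐ[mu0] 0 := by
  have h := hg 0 ⟨aestronglyMeasurable_const, by simp⟩
  rw [eLpNorm_zero, mul_zero, nonpos_iff_eq_zero] at h
  exact (eLpNorm_eq_zero_iff h0.1 two_ne_zero).1 h

lemma IsCausalExtension.trunc_ae_eq (hext : IsCausalExtension H He)
    (hae : ∀ u v, InL2 u → InL2 v → u =ᵐ[mu0] v → H u =ᵐ[mu0] H v)
    {T : ℝ} (hT : 0 < T) {e e' : ℝ → En n} (he : InL2e e) (he' : InL2e e')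
    (h : trunc T e =ᵐ[mu0] trunc T e') : trunc T (He e) =ᵐ[mu0] trunc T (He e') :=
  calc trunc T (He e)
      =ᵐ[mu0] trunc T (He (trunc T e)) := hext.causal T hT e he
    _ =ᵐ[mu0] trunc T (H (trunc T e)) := (hext.ae_eq_of_inL2 _ (he T hT)).trunc T
    _ =ᵐ[mu0] trunc T (H (trunc T e')) := (hae _ _ (he T hT) (he' T hT) h).trunc T
    _ =ᵐ[mu0] trunc T (He (trunc T e')) := (hext.ae_eq_of_inL2 _ (he' T hT)).symm.trunc T
    _ =ᵐ[mu0] trunc T (He e') := (hext.causal T hT e' he').symm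

lemma IsCausalExtension.eLpNorm_trunc_le (hext : IsCausalExtension H He) {γ : ℝ}
    (hg : HasL2Gain H γ) {T : ℝ} (hT : 0 < T) {y : ℝ → En n} (hy : InL2e y) :
    eLpNorm (trunc T (He y)) 2 mu0 ≤ ENNReal.ofReal γ * eLpNorm (trunc T y) 2 mu0 :=
  calc eLpNorm (trunc T (He y)) 2 mu0
      = eLpNorm (trunc T (H (trunc T y))) 2 mu0 := eLpNorm_congr_ae <|
        (hext.causal T hT y hy).trans ((hext.ae_eq_of_inL2 _ (hy T hT)).trunc T)
    _ ≤ eLpNorm (H (trunc T y)) 2 mu0 := _root_.eLpNorm_trunc_le T _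
    _ ≤ ENNReal.ofReal γ * eLpNorm (trunc T y) 2 mu0 := hg _ (hy T hT)

lemma IsCausalExtension.eLpNorm_trunc_sub_smul_le (hext : IsCausalExtension H He) {γ : ℝ}
    (hg : HasL2Gain H γ) {T : ℝ} (hT : 0 < T) {u y : ℝ → En n} (hu : InL2 u) (hy : InL2e y)
    (δ : ℝ) : eLpNorm (trunc T (u - δ • He y)) 2 mu0 ≤
      eLpNorm u 2 mu0 + ‖δ‖ₑ * (ENNReal.ofReal γ * eLpNorm (trunc T y) 2 mu0) :=
  calc eLpNorm (trunc T (u - δ • He y)) 2 mu0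
      ≤ eLpNorm (trunc T u) 2 mu0 + eLpNorm (δ • trunc T (He y)) 2 mu0 := by
        rw [trunc_sub, trunc_smul]
        exact eLpNorm_sub_le (hu.trunc T).1 ((hext.inL2e y hy T hT).const_smul δ).1 one_le_two
    _ ≤ _ := by
        rw [eLpNorm_const_smul]
        gcongr
        exacts [_root_.eLpNorm_trunc_le T u, hext.eLpNorm_trunc_le hg hT hy]

/-- With `τ = 0` the loop is `y = H₁ u`, so its causality is that of `H₁`. -/
lemma closedLoopCausal_zero (hae₁ : ∀ u v, InL2 u → InL2 v → u =ᵐ[mu0] v → H₁ u =ᵐ[mu0] H₁ v)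
    (hext₁ : IsCausalExtension H₁ H₁e) : ClosedLoopCausal H₁e H₂e 0 := by
  intro T hT u e y e' y' hu he _ heq hyq he' _ heq' hyq'
  simp only [zero_smul, sub_zero] at heq heq'
  have htrunc : trunc T e' =ᵐ[mu0] trunc T e := by
    simpa only [trunc_trunc_self] using (heq'.trans (heq.trunc T).symm).trunc T
  exact (hyq'.trunc T).trans <|
    (hext₁.trunc_ae_eq hae₁ hT he' he htrunc).trans (hyq.trunc T).symm

lemma fbMem_of_ae_eq {τ : ℝ} {u y e : ℝ → En n} (hu : InL2 u) (hy : InL2 y) (he : InL2 e)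
    (heq : e =ᵐ[mu0] u - τ • H₂ y) (hyq : y =ᵐ[mu0] H₁ e) : FbMem H₁ H₂ τ u y :=
  ⟨hu, hy, e, he, heq, hyq, fun _ _ he' _ => he'.trans heq.symm⟩

lemma fbMem_zero (hmap₁ : ∀ u, InL2 u → InL2 (H₁ u)) (hmap₂ : ∀ u, InL2 u → InL2 (H₂ u))
    {γ₁ γ₂ : ℝ} (hg₁ : HasL2Gain H₁ γ₁) (hg₂ : HasL2Gain H₂ γ₂) (τ : ℝ) :
    FbMem H₁ H₂ τ 0 0 := by
  have h0 : InL2 (0 : ℝ → En n) := ⟨aestronglyMeasurable_const, by simp⟩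
  refine fbMem_of_ae_eq h0 h0 h0 ?_ (hg₁.ae_eq_zero (hmap₁ 0 h0)).symm
  filter_upwards [hg₂.ae_eq_zero (hmap₂ 0 h0)] with t ht
  simp [ht]

lemma fbTotal_zero (hmap₁ : ∀ u, InL2 u → InL2 (H₁ u)) : FbTotal H₁ H₂ 0 := fun u hu =>
  ⟨H₁ u, fbMem_of_ae_eq hu (hmap₁ u hu) hu (by rw [zero_smul, sub_zero]) .rfl⟩

lemma fbMem_of_extended (hmap₂ : ∀ u, InL2 u → InL2 (H₂ u))
    (hext₁ : IsCausalExtension H₁ H₁e) (hext₂ : IsCausalExtension H₂ H₂e)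
    {τ : ℝ} {u e y : ℝ → En n} (hu : InL2 u) (hy : InL2 y)
    (heq : e =ᵐ[mu0] u - τ • H₂e y) (hyq : y =ᵐ[mu0] H₁e e) : FbMem H₁ H₂ τ u y := by
  have heq' : e =ᵐ[mu0] u - τ • H₂ y :=
    heq.trans (EventuallyEq.rfl.sub ((hext₂.ae_eq_of_inL2 y hy).const_smul τ))
  have he : InL2 e := (hu.sub ((hmap₂ y hy).const_smul τ)).ae_eq heq'.symm
  exact fbMem_of_ae_eq hu hy he heq' (hyq.trans (hext₁.ae_eq_of_inL2 e he))

lemma trunc_ae_eq_of_fbMem_trunc (hext₁ : IsCausalExtension H₁ H₁e)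
    (hext₂ : IsCausalExtension H₂ H₂e) {τ T : ℝ} (hcl : ClosedLoopCausal H₁e H₂e τ) (hT : 0 < T)
    {v e y yT : ℝ → En n} (hv : InL2e v) (he : InL2e e) (hy : InL2e y)
    (heq : e =ᵐ[mu0] v - τ • H₂e y) (hyq : y =ᵐ[mu0] H₁e e)
    (hfb : FbMem H₁ H₂ τ (trunc T v) yT) : trunc T y =ᵐ[mu0] trunc T yT := by
  obtain ⟨-, hyT, eT, heT, heqT, hyqT, -⟩ := hfb
  refine (hcl T hT v e y eT yT hv he hy heq hyq heT.inL2e hyT.inL2e ?_ ?_).symm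
  · exact heqT.trans (EventuallyEq.rfl.sub ((hext₂.ae_eq_of_inL2 yT hyT).symm.const_smul τ))
  · exact hyqT.trans (hext₁.ae_eq_of_inL2 eT heT).symm

theorem inL2_of_extended_solution (hext₁ : IsCausalExtension H₁ H₁e)
    (hext₂ : IsCausalExtension H₂ H₂e) {γ γ₂ τ δ : ℝ} (hγ : 0 ≤ γ) (hγ₂ : 0 ≤ γ₂)
    (hg₂ : HasL2Gain H₂ γ₂) (hcl : ClosedLoopCausal H₁e H₂e τ) (htot : FbTotal H₁ H₂ τ)
    (hbd : ∀ u y, FbMem H₁ H₂ τ u y → eLpNorm y 2 mu0 ≤ ENNReal.ofReal γ * eLpNorm u 2 mu0)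
    (hsmall : γ * γ₂ * |δ| < 1) {u e y : ℝ → En n} (hu : InL2 u) (he : InL2e e) (hy : InL2e y)
    (heq : e =ᵐ[mu0] u - (τ + δ) • H₂e y) (hyq : y =ᵐ[mu0] H₁e e) : InL2 y := by
  set v := u - δ • H₂e y
  have hv : InL2e v := hu.inL2e.sub ((hext₂.inL2e y hy).const_smul δ)
  have hev : e =ᵐ[mu0] v - τ • H₂e y := by
    rwa [sub_sub, ← add_smul, add_comm δ]
  have hc : ENNReal.ofReal γ * ENNReal.ofReal γ₂ * ‖δ‖ₑ < 1 := by
    rwa [Real.enorm_eq_ofReal_abs, ← ENNReal.ofReal_mul hγ, ← ENNReal.ofReal_mul (by positivity),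
      ENNReal.ofReal_lt_one]
  set c := ENNReal.ofReal γ * ENNReal.ofReal γ₂ * ‖δ‖ₑ
  have hyT (T : ℝ) (hT : 0 < T) : eLpNorm (trunc T y) 2 mu0 ≤
      ENNReal.ofReal γ * eLpNorm u 2 mu0 + c * eLpNorm (trunc T y) 2 mu0 := by
    obtain ⟨yT, hfb⟩ := htot _ (hv T hT)
    calc eLpNorm (trunc T y) 2 mu0
        = eLpNorm (trunc T yT) 2 mu0 :=
          eLpNorm_congr_ae (trunc_ae_eq_of_fbMem_trunc hext₁ hext₂ hcl hT hv he hy hev hyq hfb)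
      _ ≤ ENNReal.ofReal γ * eLpNorm (trunc T v) 2 mu0 :=
          (eLpNorm_trunc_le T yT).trans (hbd _ _ hfb)
      _ ≤ ENNReal.ofReal γ *
          (eLpNorm u 2 mu0 + ‖δ‖ₑ * (ENNReal.ofReal γ₂ * eLpNorm (trunc T y) 2 mu0)) := by
          gcongr; exact hext₂.eLpNorm_trunc_sub_smul_le hg₂ hT hu hy δ
      _ = _ := by ring
  have hB : ENNReal.ofReal γ * eLpNorm u 2 mu0 / (1 - c) ≠ ∞ :=
    (ENNReal.div_lt_top (ENNReal.mul_ne_top ENNReal.ofReal_ne_top hu.2.ne)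
      (tsub_pos_of_lt hc).ne').ne
  exact inL2_of_forall_eLpNorm_trunc_le hy hB fun T hT =>
    ENNReal.le_div_of_le_add_mul (hy T hT).2.ne hc (hyT T hT)

end Feedback

lemma holds_at_one_of_small_steps {P : ℝ → Prop} (c : ℝ) (h0 : P 0)
    (hstep : ∀ τ δ, 0 ≤ τ → 0 < δ → τ + δ ≤ 1 → c * δ < 1 → P τ → P (τ + δ)) : P 1 := by
  obtain ⟨N, hN⟩ := exists_nat_gt c
  have hN₁ : (0 : ℝ) < N + 1 := by positivity
  have hk : ∀ k : ℕ, k ≤ N + 1 → P (k / (N + 1)) := by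
    intro k
    induction k with
    | zero => simpa using h0
    | succ k ih =>
      intro hk
      have hkN : (k : ℝ) + 1 ≤ N + 1 := by exact_mod_cast hk
      have hsmall : c * (1 / (N + 1)) < 1 := by
        rw [mul_one_div, div_lt_one hN₁]; linarith
      convert hstep _ _ (by positivity) (by positivity) (by rwa [← add_div, div_le_one hN₁])
        hsmall (ih (by omega)) using 1
      push_cast; ring
  simpa [hN₁.ne'] using hk (N + 1) (by simp)

theorem non_incremental_homotopy_general
    (H₁ H₂ H₁e H₂e : (ℝ → En n) → (ℝ → En n))
    -- `H₁, H₂` are operators on `L²` (preserving `L²` and a.e. equality)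
    (hmap₁ : ∀ u, InL2 u → InL2 (H₁ u)) (hmap₂ : ∀ u, InL2 u → InL2 (H₂ u))
    (hae₁ : ∀ u v, InL2 u → InL2 v → u =ᵐ[mu0] v → H₁ u =ᵐ[mu0] H₁ v)
    -- … and have finite gain with zero offset
    (hg₁ : ∃ γ₁ : ℝ, 0 < γ₁ ∧ ∀ u, InL2 u →
      eLpNorm (H₁ u) 2 mu0 ≤ ENNReal.ofReal γ₁ * eLpNorm u 2 mu0)
    (hg₂ : ∃ γ₂ : ℝ, 0 < γ₂ ∧ ∀ u, InL2 u →
      eLpNorm (H₂ u) 2 mu0 ≤ ENNReal.ofReal γ₂ * eLpNorm u 2 mu0)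
    -- `H₁e, H₂e` are the causal extensions of `H₁, H₂` to the extended space
    (hext₁ : (∀ u, InL2e u → InL2e (H₁e u)) ∧ (∀ u, InL2 u → H₁e u =ᵐ[mu0] H₁ u) ∧
      (∀ T > 0, ∀ u, InL2e u → trunc T (H₁e u) =ᵐ[mu0] trunc T (H₁e (trunc T u))))
    (hext₂ : (∀ u, InL2e u → InL2e (H₂e u)) ∧ (∀ u, InL2 u → H₂e u =ᵐ[mu0] H₂ u) ∧
      (∀ T > 0, ∀ u, InL2e u → trunc T (H₂e u) =ᵐ[mu0] trunc T (H₂e (trunc T u))))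
    -- (ii) the feedback interconnection `[H₁, τH₂]` is well-posed on the extended space…
    (hwp : ∀ τ ∈ Set.Ioc (0 : ℝ) 1, ∀ u, InL2e u → ∃ e y, InL2e e ∧ InL2e y ∧
      e =ᵐ[mu0] u - τ • H₂e y ∧ y =ᵐ[mu0] H₁e e ∧
      ∀ e' y', InL2e e' → InL2e y' → e' =ᵐ[mu0] u - τ • H₂e y' → y' =ᵐ[mu0] H₁e e' →
        e' =ᵐ[mu0] e ∧ y' =ᵐ[mu0] y)
    -- … and the resulting map `u ↦ y` on the extended space is causal
    (hclcausal : ∀ τ ∈ Set.Ioc (0 : ℝ) 1, ∀ T > 0, ∀ u e y e' y',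
      InL2e u → InL2e e → InL2e y →
      e =ᵐ[mu0] u - τ • H₂e y → y =ᵐ[mu0] H₁e e →
      InL2e e' → InL2e y' →
      e' =ᵐ[mu0] trunc T u - τ • H₂e y' → y' =ᵐ[mu0] H₁e e' →
      trunc T y' =ᵐ[mu0] trunc T y)
    -- (iii) a uniform incremental bound along the homotopy path
    (γ : ℝ) (hγ : 0 < γ)
    (hbound : ∀ τ ∈ Set.Icc (0 : ℝ) 1, ∀ u₁ y₁ u₂ y₂,
      FbMem H₁ H₂ τ u₁ y₁ → FbMem H₁ H₂ τ u₂ y₂ →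
      eLpNorm (y₁ - y₂) 2 mu0 ≤ ENNReal.ofReal γ * eLpNorm (u₁ - u₂) 2 mu0) :
    -- conclusion: `[H₁, H₂]` maps all of `L²` to `L²` and has finite incremental gain
    (∀ u, InL2 u → ∃ y, FbMem H₁ H₂ 1 u y) ∧
    (∃ γ' : ℝ, ∀ u₁ y₁ u₂ y₂,
      FbMem H₁ H₂ 1 u₁ y₁ → FbMem H₁ H₂ 1 u₂ y₂ →
      eLpNorm (y₁ - y₂) 2 mu0 ≤ ENNReal.ofReal γ' * eLpNorm (u₁ - u₂) 2 mu0) := by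
  obtain ⟨γ₁, -, hg₁⟩ := hg₁
  obtain ⟨γ₂, hγ₂, hg₂⟩ := hg₂
  have hext₁ : IsCausalExtension H₁ H₁e := ⟨hext₁.1, hext₁.2.1, hext₁.2.2⟩
  have hext₂ : IsCausalExtension H₂ H₂e := ⟨hext₂.1, hext₂.2.1, hext₂.2.2⟩
  refine ⟨fun u => ?_, γ, hbound 1 ⟨zero_le_one, le_rfl⟩⟩
  refine holds_at_one_of_small_steps (γ * γ₂) (fbTotal_zero hmap₁) ?_ u
  intro τ δ hτ hδ hτδ hsmall htot u hu
  obtain ⟨e, y, he, hy, heq, hyq, -⟩ := hwp (τ + δ) ⟨by linarith, hτδ⟩ u hu.inL2e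
  have hcl : ClosedLoopCausal H₁e H₂e τ := by
    rcases hτ.eq_or_lt with rfl | hτ
    exacts [closedLoopCausal_zero hae₁ hext₁, hclcausal τ ⟨hτ, by linarith⟩]
  have hbd (u y) (h : FbMem H₁ H₂ τ u y) :
      eLpNorm y 2 mu0 ≤ ENNReal.ofReal γ * eLpNorm u 2 mu0 := by
    simpa using hbound τ ⟨hτ, by linarith⟩ u y 0 0 h (fbMem_zero hmap₁ hmap₂ hg₁ hg₂ τ)
  have hyL2 : InL2 y := inL2_of_extended_solution hext₁ hext₂ hγ.le hγ₂.le hg₂ hcl htot hbd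
    (by rwa [abs_of_pos hδ]) hu he hy heq hyq
  exact ⟨y, fbMem_of_extended hmap₂ hext₁ hext₂ hu hyL2 heq hyq⟩

theorem non_incremental_homotopy
    (H₁ H₂ H₁e H₂e : (ℝ → En n) → (ℝ → En n))
    -- `H₁, H₂` are operators on `L²` (preserving `L²` and a.e. equality)
    (hmap₁ : ∀ u, InL2 u → InL2 (H₁ u)) (hmap₂ : ∀ u, InL2 u → InL2 (H₂ u))
    (hae₁ : ∀ u v, InL2 u → InL2 v → u =ᵐ[mu0] v → H₁ u =ᵐ[mu0] H₁ v)
    (hae₂ : ∀ u v, InL2 u → InL2 v → u =ᵐ[mu0] v → H₂ u =ᵐ[mu0] H₂ v)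
    -- (i) `H₁, H₂` are causal …
    (hc₁ : ∀ T > 0, ∀ u, InL2 u → trunc T (H₁ (trunc T u)) =ᵐ[mu0] trunc T (H₁ u))
    (hc₂ : ∀ T > 0, ∀ u, InL2 u → trunc T (H₂ (trunc T u)) =ᵐ[mu0] trunc T (H₂ u))
    -- … and have finite gain with zero offset
    (hg₁ : ∃ γ₁ : ℝ, 0 < γ₁ ∧ ∀ u, InL2 u →
      eLpNorm (H₁ u) 2 mu0 ≤ ENNReal.ofReal γ₁ * eLpNorm u 2 mu0)
    (hg₂ : ∃ γ₂ : ℝ, 0 < γ₂ ∧ ∀ u, InL2 u →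
      eLpNorm (H₂ u) 2 mu0 ≤ ENNReal.ofReal γ₂ * eLpNorm u 2 mu0)
    -- `H₁e, H₂e` are the causal extensions of `H₁, H₂` to the extended space
    (hext₁ : (∀ u, InL2e u → InL2e (H₁e u)) ∧ (∀ u, InL2 u → H₁e u =ᵐ[mu0] H₁ u) ∧
      (∀ T > 0, ∀ u, InL2e u → trunc T (H₁e u) =ᵐ[mu0] trunc T (H₁e (trunc T u))))
    (hext₂ : (∀ u, InL2e u → InL2e (H₂e u)) ∧ (∀ u, InL2 u → H₂e u =ᵐ[mu0] H₂ u) ∧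
      (∀ T > 0, ∀ u, InL2e u → trunc T (H₂e u) =ᵐ[mu0] trunc T (H₂e (trunc T u))))
    -- (ii) the feedback interconnection `[H₁, τH₂]` is well-posed on the extended space…
    (hwp : ∀ τ ∈ Set.Ioc (0 : ℝ) 1, ∀ u, InL2e u → ∃ e y, InL2e e ∧ InL2e y ∧
      e =ᵐ[mu0] u - τ • H₂e y ∧ y =ᵐ[mu0] H₁e e ∧
      ∀ e' y', InL2e e' → InL2e y' → e' =ᵐ[mu0] u - τ • H₂e y' → y' =ᵐ[mu0] H₁e e' →
        e' =ᵐ[mu0] e ∧ y' =ᵐ[mu0] y)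
    -- … and the resulting map `u ↦ y` on the extended space is causal
    (hclcausal : ∀ τ ∈ Set.Ioc (0 : ℝ) 1, ∀ T > 0, ∀ u e y e' y',
      InL2e u → InL2e e → InL2e y →
      e =ᵐ[mu0] u - τ • H₂e y → y =ᵐ[mu0] H₁e e →
      InL2e e' → InL2e y' →
      e' =ᵐ[mu0] trunc T u - τ • H₂e y' → y' =ᵐ[mu0] H₁e e' →
      trunc T y' =ᵐ[mu0] trunc T y)
    -- (iii) a uniform incremental bound along the homotopy path
    (γ : ℝ) (hγ : 0 < γ)
    (hbound : ∀ τ ∈ Set.Icc (0 : ℝ) 1, ∀ u₁ y₁ u₂ y₂,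
      FbMem H₁ H₂ τ u₁ y₁ → FbMem H₁ H₂ τ u₂ y₂ →
      eLpNorm (y₁ - y₂) 2 mu0 ≤ ENNReal.ofReal γ * eLpNorm (u₁ - u₂) 2 mu0) :
    -- conclusion: `[H₁, H₂]` maps all of `L²` to `L²` and has finite incremental gain
    (∀ u, InL2 u → ∃ y, FbMem H₁ H₂ 1 u y) ∧
    (∃ γ' : ℝ, ∀ u₁ y₁ u₂ y₂,
      FbMem H₁ H₂ 1 u₁ y₁ → FbMem H₁ H₂ 1 u₂ y₂ →
      eLpNorm (y₁ - y₂) 2 mu0 ≤ ENNReal.ofReal γ' * eLpNorm (u₁ - u₂) 2 mu0) :=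
  non_incremental_homotopy_general H₁ H₂ H₁e H₂e hmap₁ hmap₂ hae₁ hg₁ hg₂ hext₁ hext₂ hwp hclcausal
    γ hγ hbound
end
end
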